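/- Zero-energy states of the Kitaev Hamiltonian encode accepting computations: Let W = ⨂_{j=1}^N ℂ², let U_1, …, U_T be unitaries on W, let A_in, A_out ⊆ {1, …, N}, and for a qubit j let P_j denote the orthogonal projector onto |1⟩ on qubit j (tensored with the identity elsewhere). On ℂ^{T+1} ⊗ W set H = H_i + H_p + H_o, where H_p is the propagation Hamiltonian built from U_1, …, U_T, H_i = |0⟩⟨0| ⊗ Σ_{j ∈ A_in} P_j and H_o = |T⟩⟨T| ⊗ Σ_{j ∈ A_out} P_j. Then ker H ≠ {0} if and only if there exists a nonzero ξ ∈ W with P_j ξ = 0 for all j ∈ A_in and P_j (U_T ⋯ U_1 ξ) = 0 for all j ∈ A_out; moreover, the zero-energy states of H are exactly the history states (T+1)^{−1/2} Σ_{t=0}^T |t⟩ ⊗ U_t ⋯ U_1 ξ of such ξ. -/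

import Mathlib

open scoped BigOperators

noncomputable section

/-- The `N`-qubit Hilbert space `W = ⨂_{j=1}^N ℂ²`, realized as
`ℓ²`-functions on the set of computational basis configurations. -/
abbrev QubitSpace (N : ℕ) := EuclideanSpace ℂ (Fin N → Fin 2)

/-- The orthogonal projector onto `|1⟩` on qubit `j` (tensored with the identity on
the remaining qubits). -/
def qubitOneProj (N : ℕ) (j : Fin N) : QubitSpace N →ₗ[ℂ] QubitSpace N where
  toFun ψ := WithLp.toLp 2 (fun σ => if σ j = 1 then ψ σ else 0)
  map_add' ψ χ := by
    ext σ
    by_cases h : σ j = 1 <;> simp [h]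
  map_smul' a ψ := by
    ext σ
    by_cases h : σ j = 1 <;> simp [h]

/-- `histFun T U t` is the composite `U_t ∘ U_{t-1} ∘ ⋯ ∘ U_1` of the first `t`
circuit unitaries (the empty composite for `t = 0` being the identity). -/
def histFun {W : Type*} [NormedAddCommGroup W] [InnerProductSpace ℂ W]
    (T : ℕ) (U : Fin T → (W ≃ₗᵢ[ℂ] W)) : ℕ → W → W
  | 0 => id
  | n + 1 => if h : n < T then (fun w => U ⟨n, h⟩ (histFun T U n w)) else histFun T U n

/-- Feynman–Kitaev propagation Hamiltonian
`H_p = (1/2) ∑_{t=0}^{T-1} [(|t⟩⟨t| + |t+1⟩⟨t+1|) ⊗ 1 - |t+1⟩⟨t| ⊗ U_{t+1} - |t⟩⟨t+1| ⊗ U_{t+1}†]`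
acting on `ℂ^{T+1} ⊗ W`, realized as the space of functions `Fin (T+1) → W`. -/
def propHam {W : Type*} [NormedAddCommGroup W] [InnerProductSpace ℂ W]
    (T : ℕ) (U : Fin T → (W ≃ₗᵢ[ℂ] W)) :
    ((Fin (T + 1) → W) →ₗ[ℂ] (Fin (T + 1) → W)) :=
  (2 : ℂ)⁻¹ • ∑ t : Fin T,
    ((LinearMap.single ℂ (fun _ : Fin (T + 1) => W) t.castSucc) ∘ₗ
        ((LinearMap.proj t.castSucc : (∀ _ : Fin (T + 1), W) →ₗ[ℂ] W) -
          ((U t).symm.toLinearEquiv.toLinearMap ∘ₗ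
            (LinearMap.proj t.succ : (∀ _ : Fin (T + 1), W) →ₗ[ℂ] W))) +
      (LinearMap.single ℂ (fun _ : Fin (T + 1) => W) t.succ) ∘ₗ
        ((LinearMap.proj t.succ : (∀ _ : Fin (T + 1), W) →ₗ[ℂ] W) -
          ((U t).toLinearEquiv.toLinearMap ∘ₗ
            (LinearMap.proj t.castSucc : (∀ _ : Fin (T + 1), W) →ₗ[ℂ] W))))

/-- The input penalty `H_i = |0⟩⟨0| ⊗ ∑_{j ∈ A_in} P_j`. -/
def inputHam (T N : ℕ) (Ain : Finset (Fin N)) :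
    ((Fin (T + 1) → QubitSpace N) →ₗ[ℂ] (Fin (T + 1) → QubitSpace N)) :=
  (LinearMap.single ℂ (fun _ : Fin (T + 1) => QubitSpace N) 0) ∘ₗ
    (∑ j ∈ Ain, qubitOneProj N j) ∘ₗ
      (LinearMap.proj 0 : (∀ _ : Fin (T + 1), QubitSpace N) →ₗ[ℂ] QubitSpace N)

/-- The output penalty `H_o = |T⟩⟨T| ⊗ ∑_{j ∈ A_out} P_j`. -/
def outputHam (T N : ℕ) (Aout : Finset (Fin N)) :
    ((Fin (T + 1) → QubitSpace N) →ₗ[ℂ] (Fin (T + 1) → QubitSpace N)) :=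
  (LinearMap.single ℂ (fun _ : Fin (T + 1) => QubitSpace N) (Fin.last T)) ∘ₗ
    (∑ j ∈ Aout, qubitOneProj N j) ∘ₗ
      (LinearMap.proj (Fin.last T) :
        (∀ _ : Fin (T + 1), QubitSpace N) →ₗ[ℂ] QubitSpace N)

/-- The Kitaev Hamiltonian `H = H_i + H_p + H_o`. -/
def kitaevHam (T N : ℕ) (U : Fin T → (QubitSpace N ≃ₗᵢ[ℂ] QubitSpace N))
    (Ain Aout : Finset (Fin N)) :
    ((Fin (T + 1) → QubitSpace N) →ₗ[ℂ] (Fin (T + 1) → QubitSpace N)) :=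
  inputHam T N Ain + propHam T U + outputHam T N Aout

/-! Pairing `H ψ` with `ψ` gives the sum of squares
`∑_{j ∈ A_in} ‖P_j ψ₀‖² + ½ ∑_t ‖ψ_{t+1} - U_{t+1} ψ_t‖² + ∑_{j ∈ A_out} ‖P_j ψ_T‖²`
(unitarity of `U_{t+1}` turns each propagation block into the square of `ψ_{t+1} - U_{t+1} ψ_t`).
Hence `H ψ = 0` forces every term to vanish: `ψ` is the history state `t ↦ U_t ⋯ U_1 ψ₀` of an
input `ψ₀` passing the input and output checks, and every such state is annihilated term by term.
Since these inputs form a cone, the normalisation `(T+1)^{-1/2}` does not change the set. -/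

open scoped InnerProductSpace

theorem Finset.sum_norm_sq_eq_zero_iff {ι E : Type*} [NormedAddCommGroup E] {s : Finset ι}
    {f : ι → E} : ∑ i ∈ s, ‖f i‖ ^ 2 = 0 ↔ ∀ i ∈ s, f i = 0 := by
  simp [Finset.sum_eq_zero_iff_of_nonneg fun i _ => sq_nonneg ‖f i‖]

theorem sum_inner_single_right {ι W : Type*} [Fintype ι] [DecidableEq ι] [NormedAddCommGroup W]
    [InnerProductSpace ℂ W] (ψ : ι → W) (a : ι) (v : W) :
    ∑ s, ⟪ψ s, (Pi.single a v : ι → W) s⟫_ℂ = ⟪ψ a, v⟫_ℂ := by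
  rw [Finset.sum_eq_single a (fun b _ hb => by simp [Pi.single_eq_of_ne hb]) (by simp)]
  simp

section Propagation

variable {W : Type*} [NormedAddCommGroup W] [InnerProductSpace ℂ W]

theorem LinearIsometryEquiv.inner_sub_symm_add_inner_sub (V : W ≃ₗᵢ[ℂ] W) (a b : W) :
    ⟪a, a - V.symm b⟫_ℂ + ⟪b, b - V a⟫_ℂ = (‖b - V a‖ : ℂ) ^ 2 := by
  have hVV : ⟪V a, V a⟫_ℂ = ⟪a, a⟫_ℂ := V.inner_map_map a a
  have hadj : ⟪V a, b⟫_ℂ = ⟪a, V.symm b⟫_ℂ := by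
    simpa using V.inner_map_map a (V.symm b)
  calc ⟪a, a - V.symm b⟫_ℂ + ⟪b, b - V a⟫_ℂ = ⟪b - V a, b - V a⟫_ℂ := by
        simp only [inner_sub_left, inner_sub_right, hVV, hadj]
        ring
    _ = (‖b - V a‖ : ℂ) ^ 2 := inner_self_eq_norm_sq_to_K _

theorem histFun_succ (T : ℕ) (U : Fin T → (W ≃ₗᵢ[ℂ] W)) (t : Fin T) (w : W) :
    histFun T U (t + 1) w = U t (histFun T U t w) := by
  simp [histFun, t.isLt]

theorem histFun_smul (T : ℕ) (U : Fin T → (W ≃ₗᵢ[ℂ] W)) (n : ℕ) (c : ℂ) (w : W) :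
    histFun T U n (c • w) = c • histFun T U n w := by
  induction n with
  | zero => rfl
  | succ n ih => by_cases h : n < T <;> simp [histFun, h, ih]

theorem histFun_zero (T : ℕ) (U : Fin T → (W ≃ₗᵢ[ℂ] W)) (n : ℕ) :
    histFun T U n (0 : W) = 0 := by
  simpa using histFun_smul T U n 0 0

theorem forall_succ_eq_iff_eq_histFun {T : ℕ} (U : Fin T → (W ≃ₗᵢ[ℂ] W))
    (ψ : Fin (T + 1) → W) :
    (∀ t : Fin T, ψ t.succ = U t (ψ t.castSucc)) ↔
      ∀ t : Fin (T + 1), ψ t = histFun T U t (ψ 0) := by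
  constructor
  · intro h t
    induction t using Fin.induction with
    | zero => rfl
    | succ t ih => rw [h t, ih, Fin.val_succ, histFun_succ, Fin.val_castSucc]
  · intro h t
    rw [h t.succ, h t.castSucc, Fin.val_succ, histFun_succ, Fin.val_castSucc]

theorem propHam_apply {T : ℕ} (U : Fin T → (W ≃ₗᵢ[ℂ] W)) (ψ : Fin (T + 1) → W) :
    propHam T U ψ = (2 : ℂ)⁻¹ • ∑ t : Fin T,
      (Pi.single t.castSucc (ψ t.castSucc - (U t).symm (ψ t.succ)) +
        Pi.single t.succ (ψ t.succ - U t (ψ t.castSucc))) := by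
  simp [propHam]

theorem sum_inner_propHam {T : ℕ} (U : Fin T → (W ≃ₗᵢ[ℂ] W)) (ψ : Fin (T + 1) → W) :
    ∑ s, ⟪ψ s, propHam T U ψ s⟫_ℂ =
      ((2⁻¹ * ∑ t : Fin T, ‖ψ t.succ - U t (ψ t.castSucc)‖ ^ 2 : ℝ) : ℂ) := by
  simp only [propHam_apply, Pi.smul_apply, Finset.sum_apply, Pi.add_apply, inner_smul_right,
    inner_add_right, inner_sum]
  rw [← Finset.mul_sum, Finset.sum_comm]
  simp only [Finset.sum_add_distrib, sum_inner_single_right,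
    LinearIsometryEquiv.inner_sub_symm_add_inner_sub]
  push_cast
  rfl

theorem propHam_apply_eq_zero {T : ℕ} (U : Fin T → (W ≃ₗᵢ[ℂ] W)) (ψ : Fin (T + 1) → W)
    (h : ∀ t : Fin T, ψ t.succ = U t (ψ t.castSucc)) : propHam T U ψ = 0 := by
  simp [propHam_apply, h]

end Propagation

section Kitaev

variable {T N : ℕ}

theorem inner_self_qubitOneProj (j : Fin N) (x : QubitSpace N) :
    ⟪x, qubitOneProj N j x⟫_ℂ = (‖qubitOneProj N j x‖ : ℂ) ^ 2 := by
  calc ⟪x, qubitOneProj N j x⟫_ℂ = ⟪qubitOneProj N j x, qubitOneProj N j x⟫_ℂ := by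
        simp only [qubitOneProj, LinearMap.coe_mk, AddHom.coe_mk, PiLp.inner_apply]
        refine Finset.sum_congr rfl fun σ _ => ?_
        split_ifs <;> simp
    _ = (‖qubitOneProj N j x‖ : ℂ) ^ 2 := inner_self_eq_norm_sq_to_K _

theorem inner_sum_qubitOneProj (A : Finset (Fin N)) (x : QubitSpace N) :
    ⟪x, ∑ j ∈ A, qubitOneProj N j x⟫_ℂ = ((∑ j ∈ A, ‖qubitOneProj N j x‖ ^ 2 : ℝ) : ℂ) := by
  push_cast
  simp only [inner_sum, inner_self_qubitOneProj]

theorem inputHam_apply (A : Finset (Fin N)) (ψ : Fin (T + 1) → QubitSpace N) :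
    inputHam T N A ψ = Pi.single 0 (∑ j ∈ A, qubitOneProj N j (ψ 0)) := by
  simp [inputHam]

theorem outputHam_apply (A : Finset (Fin N)) (ψ : Fin (T + 1) → QubitSpace N) :
    outputHam T N A ψ = Pi.single (Fin.last T) (∑ j ∈ A, qubitOneProj N j (ψ (Fin.last T))) := by
  simp [outputHam]

theorem kitaevHam_apply_eq_zero_iff (U : Fin T → (QubitSpace N ≃ₗᵢ[ℂ] QubitSpace N))
    (Ain Aout : Finset (Fin N)) (ψ : Fin (T + 1) → QubitSpace N) :
    kitaevHam T N U Ain Aout ψ = 0 ↔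
      (∀ j ∈ Ain, qubitOneProj N j (ψ 0) = 0) ∧
        (∀ t : Fin T, ψ t.succ = U t (ψ t.castSucc)) ∧
        (∀ j ∈ Aout, qubitOneProj N j (ψ (Fin.last T)) = 0) := by
  constructor
  · intro h
    have hform : ∑ j ∈ Ain, ‖qubitOneProj N j (ψ 0)‖ ^ 2 +
        2⁻¹ * ∑ t : Fin T, ‖ψ t.succ - U t (ψ t.castSucc)‖ ^ 2 +
        ∑ j ∈ Aout, ‖qubitOneProj N j (ψ (Fin.last T))‖ ^ 2 = 0 := by
      have := congrArg (fun φ => ∑ s, ⟪ψ s, φ s⟫_ℂ) h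
      simp only [kitaevHam, LinearMap.add_apply, Pi.add_apply, inner_add_right,
        Finset.sum_add_distrib, inputHam_apply, outputHam_apply, sum_inner_single_right,
        inner_sum_qubitOneProj, sum_inner_propHam, Pi.zero_apply, inner_zero_right,
        Finset.sum_const_zero] at this
      exact_mod_cast this
    have hin := Finset.sum_nonneg fun j (_ : j ∈ Ain) => sq_nonneg ‖qubitOneProj N j (ψ 0)‖
    have hprop := Finset.sum_nonneg fun t (_ : t ∈ Finset.univ) =>
      sq_nonneg ‖ψ t.succ - U t (ψ t.castSucc)‖
    have hout := Finset.sum_nonneg fun j (_ : j ∈ Aout) =>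
      sq_nonneg ‖qubitOneProj N j (ψ (Fin.last T))‖
    refine ⟨Finset.sum_norm_sq_eq_zero_iff.1 (by linarith), fun t => ?_,
      Finset.sum_norm_sq_eq_zero_iff.1 (by linarith)⟩
    exact sub_eq_zero.1 (Finset.sum_norm_sq_eq_zero_iff.1 (by linarith) t (Finset.mem_univ t))
  · rintro ⟨hin, hprop, hout⟩
    simp [kitaevHam, inputHam_apply, outputHam_apply, propHam_apply_eq_zero U ψ hprop,
      Finset.sum_eq_zero hin, Finset.sum_eq_zero hout]

theorem mem_ker_kitaevHam_iff (U : Fin T → (QubitSpace N ≃ₗᵢ[ℂ] QubitSpace N))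
    (Ain Aout : Finset (Fin N)) (ψ : Fin (T + 1) → QubitSpace N) :
    ψ ∈ LinearMap.ker (kitaevHam T N U Ain Aout) ↔
      ∃ ξ : QubitSpace N, (∀ j ∈ Ain, qubitOneProj N j ξ = 0) ∧
        (∀ j ∈ Aout, qubitOneProj N j (histFun T U T ξ) = 0) ∧
        ψ = fun t : Fin (T + 1) => histFun T U t ξ := by
  rw [LinearMap.mem_ker, kitaevHam_apply_eq_zero_iff, forall_succ_eq_iff_eq_histFun]
  constructor
  · rintro ⟨hin, hψ, hout⟩
    refine ⟨ψ 0, hin, ?_, funext hψ⟩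
    rwa [hψ (Fin.last T), Fin.val_last] at hout
  · rintro ⟨ξ, hin, hout, rfl⟩
    exact ⟨hin, fun _ => rfl, hout⟩

theorem coe_ker_kitaevHam_eq_smul_histFun (U : Fin T → (QubitSpace N ≃ₗᵢ[ℂ] QubitSpace N))
    (Ain Aout : Finset (Fin N)) {c : ℂ} (hc : c ≠ 0) :
    (LinearMap.ker (kitaevHam T N U Ain Aout) : Set (Fin (T + 1) → QubitSpace N)) =
      {ψ | ∃ ξ : QubitSpace N, (∀ j ∈ Ain, qubitOneProj N j ξ = 0) ∧
        (∀ j ∈ Aout, qubitOneProj N j (histFun T U T ξ) = 0) ∧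
        ψ = fun t => c • histFun T U t.val ξ} := by
  have accepts_smul (a : ℂ) {ξ : QubitSpace N} (hin : ∀ j ∈ Ain, qubitOneProj N j ξ = 0)
      (hout : ∀ j ∈ Aout, qubitOneProj N j (histFun T U T ξ) = 0) :
      (∀ j ∈ Ain, qubitOneProj N j (a • ξ) = 0) ∧
        ∀ j ∈ Aout, qubitOneProj N j (histFun T U T (a • ξ)) = 0 :=
    ⟨fun j hj => by rw [map_smul, hin j hj, smul_zero],
      fun j hj => by rw [histFun_smul, map_smul, hout j hj, smul_zero]⟩
  ext ψ
  rw [SetLike.mem_coe, mem_ker_kitaevHam_iff]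
  constructor
  · rintro ⟨ξ, hin, hout, rfl⟩
    obtain ⟨hin', hout'⟩ := accepts_smul c⁻¹ hin hout
    exact ⟨_, hin', hout', funext fun t => by rw [histFun_smul, smul_inv_smul₀ hc]⟩
  · rintro ⟨ξ, hin, hout, rfl⟩
    obtain ⟨hin', hout'⟩ := accepts_smul c hin hout
    exact ⟨_, hin', hout', funext fun t => (histFun_smul T U t c ξ).symm⟩

end Kitaev

/-- **Zero-energy states of the Kitaev Hamiltonian encode accepting computations.**
`ker H ≠ 0` iff some nonzero input `ξ` has correctly initialized ancillae and is
accepted with certainty; moreover the zero-energy states are exactly the history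
states `(T+1)^{-1/2} ∑_t |t⟩ ⊗ U_t ⋯ U_1 ξ` of such inputs `ξ`. -/
theorem kitaevHam_kernel (T N : ℕ) (U : Fin T → (QubitSpace N ≃ₗᵢ[ℂ] QubitSpace N))
    (Ain Aout : Finset (Fin N)) :
    ((LinearMap.ker (kitaevHam T N U Ain Aout) ≠ ⊥) ↔
      ∃ ξ : QubitSpace N, ξ ≠ 0 ∧ (∀ j ∈ Ain, qubitOneProj N j ξ = 0) ∧
        (∀ j ∈ Aout, qubitOneProj N j (histFun T U T ξ) = 0)) ∧
    ((LinearMap.ker (kitaevHam T N U Ain Aout) : Set (Fin (T + 1) → QubitSpace N)) =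
      {ψ | ∃ ξ : QubitSpace N, (∀ j ∈ Ain, qubitOneProj N j ξ = 0) ∧
        (∀ j ∈ Aout, qubitOneProj N j (histFun T U T ξ) = 0) ∧
        ψ = fun t => ((Real.sqrt (T + 1) : ℂ))⁻¹ • histFun T U t.val ξ}) := by
  have hnorm : ((Real.sqrt (T + 1) : ℂ))⁻¹ ≠ 0 :=
    inv_ne_zero (Complex.ofReal_ne_zero.2 (Real.sqrt_pos.2 (by positivity)).ne')
  refine ⟨?_, coe_ker_kitaevHam_eq_smul_histFun U Ain Aout hnorm⟩
  rw [Submodule.ne_bot_iff]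
  constructor
  · rintro ⟨ψ, hψ, hne⟩
    obtain ⟨ξ, hin, hout, rfl⟩ := (mem_ker_kitaevHam_iff U Ain Aout ψ).1 hψ
    exact ⟨ξ, fun hξ => hne (funext fun t => by simp [hξ, histFun_zero]), hin, hout⟩
  · rintro ⟨ξ, hξ, hin, hout⟩
    exact ⟨fun t => histFun T U t ξ, (mem_ker_kitaevHam_iff U Ain Aout _).2 ⟨ξ, hin, hout, rfl⟩,
      fun h => hξ (congrFun h 0)⟩

end
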